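/- Let s₃ ≈ 1.755 be the unique root in the interval (1,2) of s³ − 2s² + s − 1 = 0, and let s₄ ≈ 1.907 be the unique root in the interval (1,2) of s⁴ − 2s³ + 2s² − 4s + 1 = 0. Fix a real s with s₃ ≤ s ≤ s₄ and consider the instance of the favorite-machine scheduling game on two machines with parameter s consisting of four jobs: A of size s/((s − 1)(s² + 1)) with favorite machine 2; B of size s/(s² + 1) with favorite machine 1; C of size (s² − s + 1)/(s² + 1) with favorite machine 1; and E of size 1/(s² + 1) with favorite machine 2. Then the allocation assigning A and C to machine 1 and B and E to machine 2 is a strong equilibrium whose makespan equals (s³ − s² + 2s − 1)/(s³ − s² + s − 1), while the optimal makespan of this instance is at most 1. Consequently, the strong price of anarchy at parameter s is at least (s³ − s² + 2s − 1)/(s³ − s² + s − 1). -/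

import Mathlib

open Finset

/-- Processing time of job `j` on machine `i` in the favorite-machine model:
`q j` on the favorite machine `f j` and `s * q j` on the other machine. -/
noncomputable def ptime (s : ℝ) {n : ℕ} (q : Fin n → ℝ) (f : Fin n → Fin 2)
    (i : Fin 2) (j : Fin n) : ℝ :=
  if f j = i then q j else s * q j

/-- Load of machine `i` under allocation `x`. -/
noncomputable def load (s : ℝ) {n : ℕ} (q : Fin n → ℝ) (f : Fin n → Fin 2)
    (x : Fin n → Fin 2) (i : Fin 2) : ℝ :=
  ∑ j ∈ Finset.univ.filter (fun j => x j = i), ptime s q f i j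

/-- Makespan (maximum load) of allocation `x`. -/
noncomputable def makespan (s : ℝ) {n : ℕ} (q : Fin n → ℝ) (f : Fin n → Fin 2)
    (x : Fin n → Fin 2) : ℝ :=
  max (load s q f x 0) (load s q f x 1)

/-- The optimal (minimum) makespan over all allocations. -/
noncomputable def optMakespan (s : ℝ) {n : ℕ} (q : Fin n → ℝ) (f : Fin n → Fin 2) : ℝ :=
  ⨅ y : Fin n → Fin 2, makespan s q f y

/-- Pure Nash equilibrium: no job can move to the other machine and find there
a load smaller than its current cost. -/
def IsNE (s : ℝ) {n : ℕ} (q : Fin n → ℝ) (f : Fin n → Fin 2)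
    (x : Fin n → Fin 2) : Prop :=
  ∀ j : Fin n, ∀ i : Fin 2, i ≠ x j →
    load s q f x (x j) ≤ load s q f (Function.update x j i) i

/-- Strong equilibrium: for every deviation `y` differing from `x` on a nonempty
set of jobs, some deviating job does not improve its cost. -/
def IsSE (s : ℝ) {n : ℕ} (q : Fin n → ℝ) (f : Fin n → Fin 2)
    (x : Fin n → Fin 2) : Prop :=
  ∀ y : Fin n → Fin 2, (∃ j, y j ≠ x j) →
    ∃ j, y j ≠ x j ∧ load s q f x (x j) ≤ load s q f y (y j)

/-!
Index the machines `0, 1` (the paper's `1, 2`) and the jobs `A, B, C, E` as `0, 1, 2, 3`, with sizes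
`a, b, c, e`. In the allocation `x` the jobs `B, E` pay `s b + e = 1` and `A, C` pay `s a + c`,
and the sizes satisfy `b + c = 1`, `s e = b`, `(s - 1) a = b`, `a ≤ c` (this is `s ≥ s₃`) and
`c ≤ s a` (this holds for `s ≤ 2`). A deviating coalition either moves both `A` and `C`, and then
`A` pays `a + s c ≥ s a + c`; or moves `B` or `E` while `A` or `C` stays, and then the mover pays
at least `b + c = 1`; or moves only `A` or `C`, which then joins `B, E` and pays at least
`1 + a = s a + c`. The allocation `B, C ↦ 0`, `A, E ↦ 1` has makespan `1`.
-/

section FavoriteMachine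

variable {s : ℝ} {n : ℕ} {q : Fin n → ℝ} {f : Fin n → Fin 2}

lemma ptime_nonneg (hs : 0 ≤ s) (hq : ∀ j, 0 ≤ q j) (i : Fin 2) (j : Fin n) :
    0 ≤ ptime s q f i j := by
  unfold ptime
  split_ifs
  exacts [hq j, mul_nonneg hs (hq j)]

lemma sum_ptime_le_load (hs : 0 ≤ s) (hq : ∀ j, 0 ≤ q j) {y : Fin n → Fin 2} {i : Fin 2}
    {S : Finset (Fin n)} (hS : ∀ j ∈ S, y j = i) :
    ∑ j ∈ S, ptime s q f i j ≤ load s q f y i :=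
  Finset.sum_le_sum_of_subset_of_nonneg (fun j hj => by simp [hS j hj])
    fun j _ _ => ptime_nonneg hs hq i j

lemma makespan_nonneg (hs : 0 ≤ s) (hq : ∀ j, 0 ≤ q j) (y : Fin n → Fin 2) :
    0 ≤ makespan s q f y :=
  le_max_of_le_left (Finset.sum_nonneg fun j _ => ptime_nonneg hs hq 0 j)

lemma optMakespan_le_makespan (hs : 0 ≤ s) (hq : ∀ j, 0 ≤ q j) (y : Fin n → Fin 2) :
    optMakespan s q f ≤ makespan s q f y :=
  ciInf_le ⟨0, by rintro _ ⟨z, rfl⟩; exact makespan_nonneg hs hq z⟩ y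

end FavoriteMachine

/-- The hypotheses rule out, in turn, coalitions in which `A` and `C` both move, in which `B` or
`E` moves while `A` or `C` stays, and in which only `A` or `C` moves. -/
theorem isSE_of_sizes {s a b c e : ℝ} (hs : 0 ≤ s) (ha : 0 ≤ a) (hb : 0 ≤ b) (hc : 0 ≤ c)
    (he : 0 ≤ e) (hAC : s * a + c ≤ a + s * c)
    (hto0 : s * b + e ≤ min b (s * e) + min (s * a) c)
    (hto1 : s * a + c ≤ s * b + e + min a (s * c)) :
    IsSE s ![a, b, c, e] ![1, 0, 0, 1] ![0, 1, 0, 1] := by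
  set q : Fin 4 → ℝ := ![a, b, c, e]
  set f : Fin 4 → Fin 2 := ![1, 0, 0, 1]
  set x : Fin 4 → Fin 2 := ![0, 1, 0, 1]
  have hq : ∀ j, 0 ≤ q j := by intro j; fin_cases j <;> assumption
  have hx0 : load s q f x 0 = s * a + c := by
    simp [q, f, x, load, Finset.sum_filter, Fin.sum_univ_four, ptime]
  have hx1 : load s q f x 1 = s * b + e := by
    simp [q, f, x, load, Finset.sum_filter, Fin.sum_univ_four, ptime]
  rintro y ⟨j, hj⟩
  by_cases hAC_move : y 0 = 1 ∧ y 2 = 1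
  · refine ⟨0, by rw [hAC_move.1]; decide, ?_⟩
    calc load s q f x (x 0) = s * a + c := hx0
      _ ≤ a + s * c := hAC
      _ = ∑ j ∈ {0, 2}, ptime s q f 1 j := by simp [q, f, ptime]
      _ ≤ load s q f y (y 0) := by
        rw [hAC_move.1]; exact sum_ptime_le_load hs hq (by simp [hAC_move])
  obtain ⟨m, hm1, hm3, hym, hpm⟩ :
      ∃ m, m ≠ 1 ∧ m ≠ 3 ∧ y m = 0 ∧ min (s * a) c ≤ ptime s q f 0 m := by
    rcases not_and_or.1 hAC_move with h | h
    · exact ⟨0, by decide, by decide, by omega, by simp [q, f, ptime]⟩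
    · exact ⟨2, by decide, by decide, by omega, by simp [q, f, ptime]⟩
  by_cases hB_or_E : ∃ k, (k = 1 ∨ k = 3) ∧ y k = 0
  · obtain ⟨k, hk, hyk⟩ := hB_or_E
    have hkm : k ≠ m := by rintro rfl; rcases hk with rfl | rfl <;> contradiction
    refine ⟨k, by rcases hk with rfl | rfl <;> simp [x, hyk], ?_⟩
    calc load s q f x (x k) = s * b + e := by rcases hk with rfl | rfl <;> exact hx1
      _ ≤ min b (s * e) + min (s * a) c := hto0
      _ ≤ ptime s q f 0 k + ptime s q f 0 m :=
        add_le_add (by rcases hk with rfl | rfl <;> simp [q, f, ptime]) hpm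
      _ = ∑ j ∈ {k, m}, ptime s q f 0 j := (Finset.sum_pair hkm).symm
      _ ≤ load s q f y (y k) := by
        rw [hyk]; exact sum_ptime_le_load hs hq (by simp [hyk, hym])
  · push Not at hB_or_E
    have hy1 : y 1 = 1 := by have := hB_or_E 1 (by simp); omega
    have hy3 : y 3 = 1 := by have := hB_or_E 3 (by simp); omega
    have hA_or_C : y 0 = 1 ∨ y 2 = 1 := by
      by_contra! h
      apply hj
      fin_cases j <;> simp [x] <;> omega
    obtain ⟨m', hm'1, hm'3, hxm', hym', hpm'⟩ : ∃ m', m' ≠ 1 ∧ m' ≠ 3 ∧ x m' = 0 ∧ y m' = 1 ∧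
        min a (s * c) ≤ ptime s q f 1 m' := by
      rcases hA_or_C with h | h
      · exact ⟨0, by decide, by decide, rfl, h, by simp [q, f, ptime]⟩
      · exact ⟨2, by decide, by decide, rfl, h, by simp [q, f, ptime]⟩
    refine ⟨m', by rw [hxm', hym']; decide, ?_⟩
    calc load s q f x (x m') = s * a + c := by rw [hxm', hx0]
      _ ≤ s * b + e + min a (s * c) := hto1
      _ ≤ ptime s q f 1 1 + ptime s q f 1 3 + ptime s q f 1 m' :=
        add_le_add (by simp [q, f, ptime]) hpm'
      _ = ∑ j ∈ {m', 1, 3}, ptime s q f 1 j := by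
        rw [Finset.sum_insert (by simp [hm'1, hm'3]), Finset.sum_pair (by decide)]; ring
      _ ≤ load s q f y (y m') := by
        rw [hym']; exact sum_ptime_le_load hs hq (by simp [hym', hy1, hy3])

lemma cubic_nonneg_of_root_le {s₃ s : ℝ} (hs₃ : 1 < s₃) (hroot : s₃^3 - 2*s₃^2 + s₃ - 1 = 0)
    (hs : s₃ ≤ s) : 0 ≤ s^3 - 2*s^2 + s - 1 := by
  -- `s (s - 1)^2 - 1` is increasing on `[1, ∞)`
  nlinarith [mul_nonneg (sub_nonneg.2 hs) (sq_nonneg (s - 1)),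
    mul_nonneg (sub_nonneg.2 hs) (sq_nonneg (s₃ - 1)),
    mul_nonneg (sub_nonneg.2 hs) (by nlinarith : (0:ℝ) ≤ s * s₃ - 1)]

noncomputable def sizeA (s : ℝ) : ℝ := s / ((s - 1) * (s^2 + 1))
noncomputable def sizeB (s : ℝ) : ℝ := s / (s^2 + 1)
noncomputable def sizeC (s : ℝ) : ℝ := (s^2 - s + 1) / (s^2 + 1)
noncomputable def sizeE (s : ℝ) : ℝ := 1 / (s^2 + 1)

section Sizes

variable {s : ℝ}

lemma sizes_pos (hs : 1 < s) : 0 < sizeA s ∧ 0 < sizeB s ∧ 0 < sizeC s ∧ 0 < sizeE s := by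
  have := sub_pos.2 hs
  unfold sizeA sizeB sizeC sizeE
  exact ⟨by positivity, by positivity, div_pos (by nlinarith) (by positivity), by positivity⟩

lemma sizeB_add_sizeC (s : ℝ) : sizeB s + sizeC s = 1 := by
  unfold sizeB sizeC; field_simp; ring

lemma mul_sizeE (s : ℝ) : s * sizeE s = sizeB s := by
  unfold sizeB sizeE; ring

lemma mul_sizeB_add_sizeE (s : ℝ) : s * sizeB s + sizeE s = 1 := by
  unfold sizeB sizeE; field_simp

lemma sub_one_mul_sizeA (hs : 1 < s) : (s - 1) * sizeA s = sizeB s := by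
  have : s - 1 ≠ 0 := by linarith
  unfold sizeA sizeB; field_simp

lemma mul_sizeA_add_sizeC (hs : 1 < s) :
    s * sizeA s + sizeC s = (s^3 - s^2 + 2*s - 1) / (s^3 - s^2 + s - 1) := by
  have : s - 1 ≠ 0 := by linarith
  have : s^3 - s^2 + s - 1 = (s - 1) * (s^2 + 1) := by ring
  unfold sizeA sizeC; rw [this]; field_simp; ring

lemma sizeA_le_sizeC (hs : 1 < s) (hcubic : 0 ≤ s^3 - 2*s^2 + s - 1) : sizeA s ≤ sizeC s := by
  have : 0 < s - 1 := by linarith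
  unfold sizeA sizeC
  rw [div_le_div_iff₀ (by positivity) (by positivity)]
  nlinarith

lemma sizeC_le_mul_sizeA (hs : 1 < s) (hs2 : s ≤ 2) : sizeC s ≤ s * sizeA s := by
  have : 0 < s - 1 := by linarith
  unfold sizeA sizeC
  rw [mul_div_assoc', div_le_div_iff₀ (by positivity) (by positivity)]
  nlinarith [mul_nonneg (mul_self_nonneg s) (by linarith : (0:ℝ) ≤ 2 - s), sq_nonneg (s - 1)]

lemma sizeA_add_sizeE_le_one (hs : 1 < s) (hcubic : 0 ≤ s^3 - 2*s^2 + s - 1) :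
    sizeA s + sizeE s ≤ 1 := by
  have : 0 < s - 1 := by linarith
  unfold sizeA sizeE
  rw [div_add_div _ _ (by positivity) (by positivity), div_le_one (by positivity)]
  nlinarith

theorem isSE_sizes (hs : 1 < s) (hs2 : s ≤ 2) (hcubic : 0 ≤ s^3 - 2*s^2 + s - 1) :
    IsSE s ![sizeA s, sizeB s, sizeC s, sizeE s] ![1, 0, 0, 1] ![0, 1, 0, 1] := by
  obtain ⟨hA, hB, hC, hE⟩ := sizes_pos hs
  have hAC := sizeA_le_sizeC hs hcubic
  have hCA := sizeC_le_mul_sizeA hs hs2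
  have hBA := sub_one_mul_sizeA hs
  have hBC := sizeB_add_sizeC s
  have hBE := mul_sizeB_add_sizeE s
  refine isSE_of_sizes (by linarith) hA.le hB.le hC.le hE.le ?_ ?_ ?_
  · nlinarith [mul_le_mul_of_nonneg_left hAC (sub_nonneg.2 hs.le)]
  · rw [mul_sizeE, min_self, min_eq_right hCA, hBE, hBC]
  · rw [min_eq_left (hAC.trans (le_mul_of_one_le_left hC.le hs.le)), hBE]
    linarith

lemma makespan_sizes (hs : 1 < s) :
    makespan s ![sizeA s, sizeB s, sizeC s, sizeE s] ![1, 0, 0, 1] ![0, 1, 0, 1] =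
      (s^3 - s^2 + 2*s - 1) / (s^3 - s^2 + s - 1) := by
  have hA := (sizes_pos hs).1
  have hBA := sub_one_mul_sizeA hs
  have hBC := sizeB_add_sizeC s
  simp only [makespan, load, ptime, sum_filter, Fin.sum_univ_four, Matrix.cons_val_zero,
    Matrix.cons_val_one, Matrix.cons_val, one_ne_zero, zero_ne_one, if_true, if_false, add_zero,
    zero_add]
  rw [mul_sizeB_add_sizeE, max_eq_left (by linarith), mul_sizeA_add_sizeC hs]

lemma optMakespan_sizes_le_one (hs : 1 < s) (hcubic : 0 ≤ s^3 - 2*s^2 + s - 1) :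
    optMakespan s ![sizeA s, sizeB s, sizeC s, sizeE s] ![1, 0, 0, 1] ≤ 1 := by
  obtain ⟨hA, hB, hC, hE⟩ := sizes_pos hs
  have hq : ∀ j, 0 ≤ ![sizeA s, sizeB s, sizeC s, sizeE s] j := by
    intro j
    fin_cases j <;> simp only [Fin.zero_eta, Fin.mk_one, Fin.reduceFinMk, Matrix.cons_val_zero,
      Matrix.cons_val_one, Matrix.cons_val] <;> positivity
  refine (optMakespan_le_makespan (by linarith) hq ![1, 0, 0, 1]).trans ?_
  simp only [makespan, load, ptime, sum_filter, Fin.sum_univ_four, Matrix.cons_val_zero,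
    Matrix.cons_val_one, Matrix.cons_val, one_ne_zero, zero_ne_one, if_true, if_false, add_zero,
    zero_add, sup_le_iff]
  exact ⟨(sizeB_add_sizeC s).le, sizeA_add_sizeE_le_one hs hcubic⟩

end Sizes

theorem spoa_lower_interval4_general
    (s₃ : ℝ) (hs₃lo : 1 < s₃)
    (hs₃root : s₃^3 - 2*s₃^2 + s₃ - 1 = 0)
    (s₄ : ℝ) (hs₄hi : s₄ < 2)
    (s : ℝ) (hs : s₃ ≤ s) (hs' : s ≤ s₄)
    (q : Fin 4 → ℝ) (hq : q = ![s/((s - 1)*(s^2 + 1)), s/(s^2 + 1), (s^2 - s + 1)/(s^2 + 1), 1/(s^2 + 1)])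
    (f : Fin 4 → Fin 2) (hf : f = ![1, 0, 0, 1])
    (x : Fin 4 → Fin 2) (hx : x = ![0, 1, 0, 1]) :
    IsSE s q f x ∧
      makespan s q f x = (s^3 - s^2 + 2*s - 1)/(s^3 - s^2 + s - 1) ∧
      optMakespan s q f ≤ 1 ∧
      ((s^3 - s^2 + 2*s - 1)/(s^3 - s^2 + s - 1)) * optMakespan s q f ≤ makespan s q f x := by
  have hq' : q = ![sizeA s, sizeB s, sizeC s, sizeE s] := hq
  subst hq' hf hx
  have hs1 : 1 < s := hs₃lo.trans_le hs
  have hcubic := cubic_nonneg_of_root_le hs₃lo hs₃root hs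
  have hmak := makespan_sizes hs1
  have hopt := optMakespan_sizes_le_one hs1 hcubic
  refine ⟨isSE_sizes hs1 (hs'.trans hs₄hi.le) hcubic, hmak, hopt, ?_⟩
  rw [hmak]
  exact mul_le_of_le_one_right (div_nonneg (by nlinarith) (by nlinarith)) hopt

theorem spoa_lower_interval4
    (s₃ : ℝ) (hs₃lo : 1 < s₃) (hs₃hi : s₃ < 2)
    (hs₃root : s₃^3 - 2*s₃^2 + s₃ - 1 = 0)
    (s₄ : ℝ) (hs₄lo : 1 < s₄) (hs₄hi : s₄ < 2)
    (hs₄root : s₄^4 - 2*s₄^3 + 2*s₄^2 - 4*s₄ + 1 = 0)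
    (s : ℝ) (hs : s₃ ≤ s) (hs' : s ≤ s₄)
    (q : Fin 4 → ℝ) (hq : q = ![s/((s - 1)*(s^2 + 1)), s/(s^2 + 1), (s^2 - s + 1)/(s^2 + 1), 1/(s^2 + 1)])
    (f : Fin 4 → Fin 2) (hf : f = ![1, 0, 0, 1])
    (x : Fin 4 → Fin 2) (hx : x = ![0, 1, 0, 1]) :
    IsSE s q f x ∧
      makespan s q f x = (s^3 - s^2 + 2*s - 1)/(s^3 - s^2 + s - 1) ∧
      optMakespan s q f ≤ 1 ∧
      ((s^3 - s^2 + 2*s - 1)/(s^3 - s^2 + s - 1)) * optMakespan s q f ≤ makespan s q f x :=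
  spoa_lower_interval4_general s₃ hs₃lo hs₃root s₄ hs₄hi s hs hs' q hq f hf x hx
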